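/- Let γ > 0, n ∈ ℕ, and fix w ∈ 𝔻. Define h_w = ∏_{j=0}^{n-1}(γ+j+1)(γ+j+2)·l₁ − 2·∏_{j=0}^{n-1}(γ+j)(γ+j+2)·l₂ + ∏_{j=0}^{n-1}(γ+j)(γ+j+1)·l₃, where l_i(z) = (1-|w|²)^i/(1-conj(w)·z)^{γ+i-1}. Then h_w^{(n)}(w) = 0, h_w^{(n+1)}(w) = 0, and h_w^{(n+2)}(w) = 2·∏_{j=0}^{n-1}(γ+j)(γ+j+1)(γ+j+2) · conj(w)^{n+2}/(1-|w|²)^{γ+n+1}. -/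

import Mathlib

open Complex Metric Finset

/-- The kernel `l_i(z) = (1-|w|²)^i / (1 - conj w · z)^(γ+i-1)`. -/
noncomputable def lKernel (w : ℂ) (γ : ℝ) (i : ℕ) (z : ℂ) : ℂ :=
  ((1 - ‖w‖ ^ 2 : ℝ) : ℂ) ^ i / (1 - (starRingEnd ℂ) w * z) ^ ((γ : ℂ) + i - 1)

/-- The test function `h_w`. -/
noncomputable def hTest (w : ℂ) (γ : ℝ) (n : ℕ) (z : ℂ) : ℂ :=
  (∏ j ∈ range n, (((γ : ℂ) + j + 1) * ((γ : ℂ) + j + 2))) * lKernel w γ 1 z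
  - 2 * (∏ j ∈ range n, (((γ : ℂ) + j) * ((γ : ℂ) + j + 2))) * lKernel w γ 2 z
  + (∏ j ∈ range n, (((γ : ℂ) + j) * ((γ : ℂ) + j + 1))) * lKernel w γ 3 z


/-! With `c = conj w` and `R = 1 - |w|²`, the kernel `l_i` is `R^i (1 - c z)^(-(γ+i-1))`, and
`1 - c w = R`, so `l_i^(k)(w) = (γ+i-1)_k c^k R^(1-γ-k)` with the rising factorial `(s)_k`.
Splitting `(s)_(n+m) = (s)_n (s+n)_m`, the weights of `h_w` are chosen so that all three terms
share the factor `∏ (γ+j)(γ+j+1)(γ+j+2)`, leaving the second difference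
`(x)_m - 2 (x+1)_m + (x+2)_m` at `x = γ + n`, which is `0, 0, 2` for `m = 0, 1, 2`. -/

lemma iteratedDeriv_one_sub_mul_cpow_neg (c s : ℂ) (k : ℕ) {z : ℂ}
    (hz : 1 - c * z ∈ slitPlane) :
    iteratedDeriv k (fun z => (1 - c * z) ^ (-s)) z =
      (∏ j ∈ range k, (s + j)) * c ^ k * (1 - c * z) ^ (-s - k) := by
  induction k generalizing z with
  | zero => simp
  | succ k ih =>
    have hU : IsOpen {z : ℂ | 1 - c * z ∈ slitPlane} :=
      isOpen_slitPlane.preimage (by fun_prop)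
    have hbase : HasDerivAt (fun z : ℂ => 1 - c * z) (-c) z := by
      simpa using ((hasDerivAt_id z).const_mul c).const_sub 1
    rw [iteratedDeriv_succ,
      (Filter.eventuallyEq_of_mem (hU.mem_nhds hz) fun z hz => ih hz).deriv_eq,
      ((hbase.cpow_const hz).const_mul _).deriv, prod_range_succ]
    push_cast
    ring_nf

lemma analyticAt_one_sub_mul_cpow (c s : ℂ) {z : ℂ} (hz : 1 - c * z ∈ slitPlane) :
    AnalyticAt ℂ (fun z => (1 - c * z) ^ s) z :=
  (analyticAt_const.sub (analyticAt_const.mul analyticAt_id)).cpow analyticAt_const hz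

section Kernel

variable {w : ℂ} (γ : ℝ)

lemma one_sub_conj_mul_self (w : ℂ) :
    1 - (starRingEnd ℂ) w * w = ((1 - ‖w‖ ^ 2 : ℝ) : ℂ) := by
  rw [mul_comm, mul_conj, normSq_eq_norm_sq]
  push_cast
  ring

lemma one_sub_conj_mul_self_mem_slitPlane (hw : ‖w‖ < 1) :
    1 - (starRingEnd ℂ) w * w ∈ slitPlane := by
  rw [one_sub_conj_mul_self, ofReal_mem_slitPlane]
  nlinarith [norm_nonneg w]

lemma lKernel_eq (w : ℂ) (i : ℕ) :
    lKernel w γ i = fun z =>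
      ((1 - ‖w‖ ^ 2 : ℝ) : ℂ) ^ i * (1 - (starRingEnd ℂ) w * z) ^ (-((γ : ℂ) + i - 1)) := by
  ext z
  rw [lKernel, cpow_neg, div_eq_mul_inv]

lemma analyticAt_lKernel (hw : ‖w‖ < 1) (i : ℕ) : AnalyticAt ℂ (lKernel w γ i) w := by
  rw [lKernel_eq]
  exact analyticAt_const.mul
    (analyticAt_one_sub_mul_cpow _ _ (one_sub_conj_mul_self_mem_slitPlane hw))

lemma iteratedDeriv_lKernel_self (hw : ‖w‖ < 1) (i k : ℕ) :
    iteratedDeriv k (lKernel w γ i) w =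
      (∏ j ∈ range k, ((γ : ℂ) + i - 1 + j)) * (starRingEnd ℂ) w ^ k *
        ((1 - ‖w‖ ^ 2 : ℝ) : ℂ) ^ (1 - (γ : ℂ) - k) := by
  have hR : ((1 - ‖w‖ ^ 2 : ℝ) : ℂ) ≠ 0 := slitPlane_ne_zero
    (one_sub_conj_mul_self w ▸ one_sub_conj_mul_self_mem_slitPlane hw)
  rw [lKernel_eq, iteratedDeriv_const_mul_field,
    iteratedDeriv_one_sub_mul_cpow_neg _ _ _ (one_sub_conj_mul_self_mem_slitPlane hw),
    one_sub_conj_mul_self, mul_left_comm]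
  congr 1
  rw [← cpow_natCast, ← cpow_add _ _ hR]
  congr 1
  ring

lemma iteratedDeriv_hTest_self (n k : ℕ) (hw : ‖w‖ < 1) :
    iteratedDeriv k (hTest w γ n) w =
      ((∏ j ∈ range n, (((γ : ℂ) + j + 1) * ((γ : ℂ) + j + 2))) * ∏ j ∈ range k, ((γ : ℂ) + j)
        - 2 * (∏ j ∈ range n, (((γ : ℂ) + j) * ((γ : ℂ) + j + 2))) *
            ∏ j ∈ range k, ((γ : ℂ) + 1 + j)
        + (∏ j ∈ range n, (((γ : ℂ) + j) * ((γ : ℂ) + j + 1))) *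
            ∏ j ∈ range k, ((γ : ℂ) + 2 + j)) *
      (starRingEnd ℂ) w ^ k * ((1 - ‖w‖ ^ 2 : ℝ) : ℂ) ^ (1 - (γ : ℂ) - k) := by
  have hl (a : ℂ) (i : ℕ) : ContDiffAt ℂ k (fun z => a * lKernel w γ i z) w :=
    (analyticAt_const.mul (analyticAt_lKernel γ hw i)).contDiffAt
  unfold hTest
  rw [iteratedDeriv_fun_add ((hl _ 1).sub (hl _ 2)) (hl _ 3),
    iteratedDeriv_fun_sub (hl _ 1) (hl _ 2)]
  simp only [iteratedDeriv_const_mul_field, iteratedDeriv_lKernel_self γ hw]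
  ring_nf

end Kernel

section Coefficients

variable {R : Type*} [CommRing R]

lemma prod_range_add_add_natCast (g : R) (n m : ℕ) :
    ∏ j ∈ range (n + m), (g + j) = (∏ j ∈ range n, (g + j)) * ∏ j ∈ range m, (g + n + j) := by
  rw [prod_range_add]
  push_cast
  simp only [add_assoc]

lemma hTest_coeff_eq (g : R) (n m : ℕ) :
    (∏ j ∈ range n, ((g + j + 1) * (g + j + 2))) * ∏ j ∈ range (n + m), (g + j)
        - 2 * (∏ j ∈ range n, ((g + j) * (g + j + 2))) * ∏ j ∈ range (n + m), (g + 1 + j)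
        + (∏ j ∈ range n, ((g + j) * (g + j + 1))) * ∏ j ∈ range (n + m), (g + 2 + j) =
      (∏ j ∈ range n, ((g + j) * (g + j + 1) * (g + j + 2))) *
        (∏ j ∈ range m, (g + n + j) - 2 * ∏ j ∈ range m, (g + n + 1 + j)
          + ∏ j ∈ range m, (g + n + 2 + j)) := by
  have hsplit (a b : R) (hab : a + n = b) (f : ℕ → R)
      (hf : ∀ j, f j * (a + j) = (g + j) * (g + j + 1) * (g + j + 2)) :
      (∏ j ∈ range n, f j) * ∏ j ∈ range (n + m), (a + j) =
        (∏ j ∈ range n, ((g + j) * (g + j + 1) * (g + j + 2))) * ∏ j ∈ range m, (b + j) := by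
    rw [prod_range_add_add_natCast, hab, ← mul_assoc, ← prod_mul_distrib]
    simp only [hf]
  linear_combination
    hsplit g (g + n) rfl (fun j => (g + j + 1) * (g + j + 2)) (fun j => by ring)
    - 2 * hsplit (g + 1) (g + n + 1) (by ring) (fun j => (g + j) * (g + j + 2)) (fun j => by ring)
    + hsplit (g + 2) (g + n + 2) (by ring) (fun j => (g + j) * (g + j + 1)) (fun j => by ring)

end Coefficients

theorem hTest_derivs_general (γ : ℝ) (n : ℕ) (w : ℂ)
    (hw : w ∈ ball (0:ℂ) 1) :
    iteratedDeriv n (hTest w γ n) w = 0 ∧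
    iteratedDeriv (n + 1) (hTest w γ n) w = 0 ∧
    iteratedDeriv (n + 2) (hTest w γ n) w =
      2 * (∏ j ∈ range n, (((γ : ℂ) + j) * ((γ : ℂ) + j + 1) * ((γ : ℂ) + j + 2))) *
        ((starRingEnd ℂ) w) ^ (n + 2) /
        ((1 - ‖w‖ ^ 2 : ℝ) : ℂ) ^ ((γ : ℂ) + n + 1) := by
  have hderiv (m : ℕ) := iteratedDeriv_hTest_self γ n (n + m) (mem_ball_zero_iff.mp hw)
  simp only [hTest_coeff_eq] at hderiv
  refine ⟨?_, ?_, ?_⟩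
  · refine (hderiv 0).trans ?_
    simp only [prod_range_zero]
    ring
  · rw [hderiv 1]
    simp only [prod_range_one]
    ring
  · rw [hderiv 2, div_eq_mul_inv, ← cpow_neg]
    simp only [prod_range_succ, prod_range_zero]
    push_cast
    ring_nf

theorem hTest_derivs (γ : ℝ) (hγ : 0 < γ) (n : ℕ) (w : ℂ)
    (hw : w ∈ ball (0:ℂ) 1) :
    iteratedDeriv n (hTest w γ n) w = 0 ∧
    iteratedDeriv (n + 1) (hTest w γ n) w = 0 ∧
    iteratedDeriv (n + 2) (hTest w γ n) w =
      2 * (∏ j ∈ range n, (((γ : ℂ) + j) * ((γ : ℂ) + j + 1) * ((γ : ℂ) + j + 2))) *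
        ((starRingEnd ℂ) w) ^ (n + 2) /
        ((1 - ‖w‖ ^ 2 : ℝ) : ℂ) ^ ((γ : ℂ) + n + 1) :=
  hTest_derivs_general γ n w hw
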